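/- Define G_A : ℂ² → ℂ⁴ by G_A(u,v) = (4 + 2·u·v + v², (u + 2v)², (u + 2v)·(2u + 4v + u·v²/2), (2u + 4v + u·v²/2)²), and let S_A = {(p,q,r,s) ∈ ℂ⁴ : q·s = r² and A_h(p,q,r,s) = 0}, where A_h = 256 − 192p + 48p² − 4p³ − 128q − 80pq + p²q + 16q² + 288r + 36pr − 8qr − 108s. Then: (1) G_A(ℂ²) = S_A, so S_A is an irreducible affine algebraic surface; and (2) for every positive integer d, any map g : ℂ⁴ → ℂ⁴ satisfying g(G_X(u,v,w)) = G_X(T_d(u), T_d(v), T_d(w)) for all u, v, w ∈ ℂ satisfies g(G_A(u,v)) = G_A(T_d(u), T_d(v)) for all u, v ∈ ℂ and maps S_A onto itself: g(S_A) = S_A. -/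
import Mathlib


/-- The polynomial parametrization `G_X : ℂ³ → ℂ⁴`. -/
noncomputable def GX (u v w : ℂ) : ℂ × ℂ × ℂ × ℂ :=
  (v ^ 2 + u * v * w + w ^ 2,
   (u + v * w) ^ 2,
   (u + v * w) * (2 * v * w + u * (v ^ 2 + w ^ 2) / 2),
   (2 * v * w + u * (v ^ 2 + w ^ 2) / 2) ^ 2)

/-- The polynomial parametrization `G_A : ℂ² → ℂ⁴` of the astroid surface `S_A`. -/
noncomputable def GA (u v : ℂ) : ℂ × ℂ × ℂ × ℂ :=
  (4 + 2 * u * v + v ^ 2,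
   (u + 2 * v) ^ 2,
   (u + 2 * v) * (2 * u + 4 * v + u * v ^ 2 / 2),
   (2 * u + 4 * v + u * v ^ 2 / 2) ^ 2)

/-- The astroid surface `S_A = {qs = r², A_h = 0} ⊂ ℂ⁴`. -/
def SA : Set (ℂ × ℂ × ℂ × ℂ) :=
  {x | x.2.1 * x.2.2.2 = x.2.2.1 ^ 2 ∧
    256 - 192 * x.1 + 48 * x.1 ^ 2 - 4 * x.1 ^ 3 - 128 * x.2.1 - 80 * x.1 * x.2.1
      + x.1 ^ 2 * x.2.1 + 16 * x.2.1 ^ 2 + 288 * x.2.2.1 + 36 * x.1 * x.2.2.1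
      - 8 * x.2.1 * x.2.2.1 - 108 * x.2.2.2 = 0}

open MvPolynomial in
/-- The components of `G_A` as polynomials in two variables. -/
noncomputable def Pvec : Fin 4 → MvPolynomial (Fin 2) ℂ :=
![C 4 + 2 * X 0 * X 1 + X 1 ^ 2,
  (X 0 + 2 * X 1) ^ 2,
  (X 0 + 2 * X 1) * (2 * X 0 + 4 * X 1 + C (1/2) * X 0 * X 1 ^ 2),
  (2 * X 0 + 4 * X 1 + C (1/2) * X 0 * X 1 ^ 2) ^ 2]

open MvPolynomial in
lemma eval_comp (f : MvPolynomial (Fin 4) ℂ) (u v : ℂ) :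
    eval ![u, v] (bind₁ Pvec f)
      = eval ![(GA u v).1, (GA u v).2.1, (GA u v).2.2.1, (GA u v).2.2.2] f := by
  have h1 : eval ![u, v] (bind₁ Pvec f) = aeval (R := ℂ) ![u, v] (bind₁ Pvec f) := rfl
  rw [h1, aeval_bind₁]
  have h2 : (fun i => aeval (R := ℂ) ![u, v] (Pvec i))
      = ![(GA u v).1, (GA u v).2.1, (GA u v).2.2.1, (GA u v).2.2.2] := by
    funext i
    fin_cases i
    · show aeval (R := ℂ) ![u, v] (Pvec 0) = (GA u v).1
      simp only [Pvec, GA, Matrix.cons_val_zero, Matrix.cons_val_one, Matrix.head_cons,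
        map_add, map_mul, map_pow, map_ofNat, aeval_X, aeval_C, Algebra.algebraMap_self_apply]
      try ring
    · show aeval (R := ℂ) ![u, v] (Pvec 1) = (GA u v).2.1
      simp only [Pvec, GA, Matrix.cons_val_zero, Matrix.cons_val_one, Matrix.head_cons,
        map_add, map_mul, map_pow, map_ofNat, aeval_X, aeval_C, Algebra.algebraMap_self_apply]
      try ring
    · show aeval (R := ℂ) ![u, v] (Pvec 2) = (GA u v).2.2.1
      simp only [Pvec, GA, Matrix.cons_val_zero, Matrix.cons_val_one, Matrix.head_cons,
        Matrix.cons_val_two, Matrix.tail_cons,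
        map_add, map_mul, map_pow, map_ofNat, aeval_X, aeval_C, Algebra.algebraMap_self_apply]
      try ring
    · show aeval (R := ℂ) ![u, v] (Pvec 3) = (GA u v).2.2.2
      simp only [Pvec, GA, Matrix.cons_val_zero, Matrix.cons_val_one, Matrix.head_cons,
        Matrix.cons_val_three, Matrix.tail_cons,
        map_add, map_mul, map_pow, map_ofNat, aeval_X, aeval_C, Algebra.algebraMap_self_apply]
      try ring
  rw [h2]
  rfl

/-- Solution of the parametrization equations in the generic branch. -/
lemma GA_branch (p r s a e : ℂ) (ha0 : a ≠ 0)
    (he : e ^ 2 = a ^ 2 - 3 * p + 12)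
    (hq : a ^ 2 * s = r ^ 2)
    (h : a * (2 * a + (a - 2 * ((a + e) / 3)) * ((a + e) / 3) ^ 2 / 2) - r = 0) :
    ∃ u v : ℂ, GA u v = (p, a ^ 2, r, s) := by
  refine ⟨a - 2 * ((a + e) / 3), (a + e) / 3, ?_⟩
  have hb2 : (2 * (a - 2 * ((a + e) / 3)) + 4 * ((a + e) / 3)
      + (a - 2 * ((a + e) / 3)) * ((a + e) / 3) ^ 2 / 2) ^ 2 = s := by
    have key : a ^ 2 * ((2 * (a - 2 * ((a + e) / 3)) + 4 * ((a + e) / 3)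
        + (a - 2 * ((a + e) / 3)) * ((a + e) / 3) ^ 2 / 2) ^ 2 - s) = 0 := by
      linear_combination
        (a * (2 * a + (a - 2 * ((a + e) / 3)) * ((a + e) / 3) ^ 2 / 2) + r) * h - hq
    rcases mul_eq_zero.mp key with h2 | h2
    · exact absurd ((pow_eq_zero_iff two_ne_zero).mp h2) ha0
    · linear_combination h2
  simp only [GA, Prod.mk.injEq]
  exact ⟨by linear_combination (-1/3 : ℂ) * he, by ring, by linear_combination h, hb2⟩

lemma GA_mem_SA (u v : ℂ) : GA u v ∈ SA := by
  simp only [SA, GA, Set.mem_setOf_eq]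
  constructor <;> ring

lemma SA_subset_image : ∀ x ∈ SA, ∃ u v : ℂ, GA u v = x := by
  rintro ⟨p, q, r, s⟩ hx
  simp only [SA, Set.mem_setOf_eq] at hx
  obtain ⟨hq, hA⟩ := hx
  rcases eq_or_ne q 0 with hq0 | hq0
  · subst hq0
    have hr : r = 0 := by
      have h2 : r ^ 2 = 0 := by linear_combination - hq
      exact (pow_eq_zero_iff two_ne_zero).mp h2
    subst hr
    obtain ⟨v, hv⟩ := IsAlgClosed.exists_pow_nat_eq ((4 - p) / 3 : ℂ) two_pos
    refine ⟨-2 * v, v, ?_⟩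
    simp only [GA, Prod.mk.injEq]
    refine ⟨by linear_combination (-3 : ℂ) * hv, by ring, by ring, ?_⟩
    linear_combination (v ^ 4 + v ^ 2 * (4 - p) / 3 + (4 - p) ^ 2 / 9) * hv + (1/108 : ℂ) * hA
  · obtain ⟨a, ha⟩ := IsAlgClosed.exists_pow_nat_eq (q : ℂ) two_pos
    subst ha
    have ha0 : a ≠ 0 := by
      intro h0
      exact hq0 (by rw [h0]; ring)
    obtain ⟨e, he⟩ := IsAlgClosed.exists_pow_nat_eq (a ^ 2 - 3 * p + 12 : ℂ) two_pos
    have hW : (a * (2 * a + (a - 2 * ((a + e) / 3)) * ((a + e) / 3) ^ 2 / 2) - r)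
        * (a * (2 * a + (a - 2 * ((a - e) / 3)) * ((a - e) / 3) ^ 2 / 2) - r) = 0 := by
      linear_combination
        ((-16/81 : ℂ) * a ^ 2 + (1/9 : ℂ) * a ^ 2 * r + (8/81 : ℂ) * a ^ 2 * p
          - (1/81 : ℂ) * a ^ 2 * p ^ 2 - (4/243 : ℂ) * a ^ 2 * e ^ 2
          + (1/243 : ℂ) * a ^ 2 * e ^ 2 * p - (1/729 : ℂ) * a ^ 2 * e ^ 4
          - (53/243 : ℂ) * a ^ 4 - (1/972 : ℂ) * a ^ 4 * p
          + (5/2916 : ℂ) * a ^ 4 * e ^ 2 - (1/2916 : ℂ) * a ^ 6) * he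
        - (a ^ 2 / 108) * hA - hq
    rcases mul_eq_zero.mp hW with h | h
    · exact GA_branch p r s a e ha0 he hq h
    · refine GA_branch p r s a (-e) ha0 (by linear_combination he) hq ?_
      linear_combination h

/-- (1) `G_A(ℂ²) = S_A`, and `S_A` is an irreducible affine algebraic surface (expressed
by the prime-avoidance criterion for polynomials vanishing on it); (2) for every positive
`d`, any map `g` intertwining `G_X` with the Chebyshev action satisfies
`g(G_A(u,v)) = G_A(T_d(u), T_d(v))` and `g(S_A) = S_A`. -/
theorem astroid_surface_invariant (T : ℕ → Polynomial ℤ)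
    (hT : ∀ n : ℕ, 0 < n → ∀ s : ℂ, s ≠ 0 →
      Polynomial.aeval (s + s⁻¹) (T n) = s ^ (n : ℤ) + s ^ (-(n : ℤ))) :
    ({x : ℂ × ℂ × ℂ × ℂ | ∃ u v : ℂ, GA u v = x} = SA ∧
      (∀ f g : MvPolynomial (Fin 4) ℂ,
        (∀ x ∈ SA, MvPolynomial.eval ![x.1, x.2.1, x.2.2.1, x.2.2.2] (f * g) = 0) →
        (∀ x ∈ SA, MvPolynomial.eval ![x.1, x.2.1, x.2.2.1, x.2.2.2] f = 0) ∨
        (∀ x ∈ SA, MvPolynomial.eval ![x.1, x.2.1, x.2.2.1, x.2.2.2] g = 0))) ∧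
    (∀ d : ℕ, 0 < d → ∀ g : ℂ × ℂ × ℂ × ℂ → ℂ × ℂ × ℂ × ℂ,
      (∀ u v w : ℂ, g (GX u v w)
        = GX (Polynomial.aeval u (T d)) (Polynomial.aeval v (T d))
            (Polynomial.aeval w (T d))) →
      (∀ u v : ℂ, g (GA u v)
        = GA (Polynomial.aeval u (T d)) (Polynomial.aeval v (T d))) ∧
      g '' SA = SA) := by
  have hset : {x : ℂ × ℂ × ℂ × ℂ | ∃ u v : ℂ, GA u v = x} = SA := by
    ext x
    constructor
    · rintro ⟨u, v, rfl⟩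
      exact GA_mem_SA u v
    · intro hx
      exact SA_subset_image x hx
  refine ⟨⟨hset, ?_⟩, ?_⟩
  · -- prime avoidance
    intro f g hfg
    have hFG : MvPolynomial.bind₁ Pvec f * MvPolynomial.bind₁ Pvec g = 0 := by
      apply MvPolynomial.funext
      intro x
      have hx : x = ![x 0, x 1] := by
        funext i; fin_cases i <;> rfl
      rw [map_zero, hx, show MvPolynomial.bind₁ Pvec f * MvPolynomial.bind₁ Pvec g
          = MvPolynomial.bind₁ Pvec (f * g) by rw [map_mul], eval_comp]
      exact hfg _ (GA_mem_SA (x 0) (x 1))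
    rcases mul_eq_zero.mp hFG with h | h
    · left
      intro x hx
      obtain ⟨u, v, rfl⟩ := SA_subset_image x hx
      rw [← eval_comp, h, map_zero]
    · right
      intro x hx
      obtain ⟨u, v, rfl⟩ := SA_subset_image x hx
      rw [← eval_comp, h, map_zero]
  · intro d hd g hg
    have hT2 : Polynomial.aeval (2 : ℂ) (T d) = 2 := by
      have h := hT d hd 1 one_ne_zero
      norm_num at h
      exact h
    have hGAX : ∀ u v : ℂ, GA u v = GX u v 2 := by
      intro u v
      simp only [GA, GX, Prod.mk.injEq]
      refine ⟨by ring, by ring, by ring, by ring⟩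
    have hcomm : ∀ u v : ℂ, g (GA u v)
        = GA (Polynomial.aeval u (T d)) (Polynomial.aeval v (T d)) := by
      intro u v
      rw [hGAX, hg, hT2, ← hGAX]
    refine ⟨hcomm, ?_⟩
    have hsurj : ∀ c : ℂ, ∃ z : ℂ, Polynomial.aeval z (T d) = c := by
      set Q : Polynomial ℂ := (T d).map (algebraMap ℤ ℂ) with hQdef
      have hev : ∀ z : ℂ, Polynomial.aeval z (T d) = Q.eval z := by
        intro z
        rw [Polynomial.aeval_def, hQdef, Polynomial.eval_map]
      have hdeg : 0 < Q.degree := by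
        by_contra hcon
        push_neg at hcon
        have hC : Q = Polynomial.C (Q.coeff 0) := Polynomial.eq_C_of_degree_le_zero hcon
        have e2 : Polynomial.aeval ((2 : ℂ) + 2⁻¹) (T d)
            = 2 ^ (d : ℤ) + 2 ^ (-(d : ℤ)) := hT d hd 2 two_ne_zero
        have c1 : Q.eval 2 = Q.eval (2 + 2⁻¹) := by rw [hC]; simp
        rw [← hev, ← hev, hT2, e2] at c1
        rw [zpow_natCast, zpow_neg, zpow_natCast] at c1
        have hne : ((2 : ℂ)) ^ d ≠ 0 := pow_ne_zero d two_ne_zero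
        have hinv : ((2 : ℂ) ^ d)⁻¹ * (2 : ℂ) ^ d = 1 := inv_mul_cancel₀ hne
        have c2 : ((2 : ℂ) ^ d - 1) ^ 2 = 0 := by
          linear_combination (-(2 : ℂ) ^ d) * c1 - hinv
        have c3 : (2 : ℂ) ^ d = 1 := by
          have h3 := (pow_eq_zero_iff two_ne_zero).mp c2
          linear_combination h3
        have c5 : (2 : ℝ) ^ d = 1 := by exact_mod_cast c3
        have c6 : (2 : ℝ) ≤ 2 ^ d := by
          calc (2 : ℝ) = 2 ^ 1 := (pow_one 2).symm
          _ ≤ 2 ^ d := by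
            apply pow_le_pow_right₀ (by norm_num) hd
        linarith
      intro c
      have hdc : 0 < (Q - Polynomial.C c).degree := by
        rwa [Polynomial.degree_sub_eq_left_of_degree_lt
          (lt_of_le_of_lt (Polynomial.degree_C_le) hdeg)]
      obtain ⟨z, hz⟩ := Complex.exists_root hdc
      refine ⟨z, ?_⟩
      have hz' : Q.eval z - c = 0 := by
        simpa [Polynomial.IsRoot] using hz
      rw [hev]
      linear_combination hz'
    apply Set.Subset.antisymm
    · rintro x ⟨y, hy, rfl⟩
      obtain ⟨u, v, rfl⟩ := SA_subset_image y hy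
      rw [hcomm]
      exact GA_mem_SA _ _
    · intro x hx
      obtain ⟨α, β, rfl⟩ := SA_subset_image x hx
      obtain ⟨u, hu⟩ := hsurj α
      obtain ⟨v, hv⟩ := hsurj β
      exact ⟨GA u v, GA_mem_SA u v, by rw [hcomm, hu, hv]⟩
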